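/- Let X := (ℕ × ℕ) ⊕ ℕ ⊕ Unit, with Xₙ := {n} × ℕ, yₙ the n-th point of the middle summand, and z the point of the last summand, and let ξ be the convergence on X in which a proper filter F converges to x iff every ultrafilter finer than F converges to x, where an ultrafilter V converges to a point x ∈ ⋃ₙ Xₙ iff V = pure x; V converges to yₙ iff V = pure yₙ or V refines the cofinite filter on Xₙ; and V converges to z iff V = pure z, or V refines the cofinite filter on {yₙ : n ∈ ω}, or there is a sequence (xₙ)ₙ with xₙ ∈ Xₙ for each n such that V refines the cofinite filter on {xₙ : n ∈ ω}. Then ξ is subdiagonal: for every subset A ⊆ X, adh_ξ(adh_ξ A) = adh_ξ A. -/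
import Mathlib


open Filter Set

/-- A convergence on `X`: a relation between points and proper filters such that
limits are preserved under refinement and `pure x` converges to `x`. -/
def IsConvergence {X : Type*} (lim : X → Filter X → Prop) : Prop :=
  (∀ (x : X) (F G : Filter X), G.NeBot → G ≤ F → lim x F → lim x G) ∧
  (∀ x : X, lim x (pure x))

/-- The adherence of a filter `H`: the set of points that are limits of some
proper filter finer than `H`. -/
def adh {X : Type*} (lim : X → Filter X → Prop) (H : Filter X) : Set X :=
  {x | ∃ G : Filter X, G.NeBot ∧ G ≤ H ∧ lim x G}

/-- Adherence of a set: the adherence of its principal filter. -/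
def adhSet {X : Type*} (lim : X → Filter X → Prop) (A : Set X) : Set X :=
  adh lim (𝓟 A)

/-- The ground set `X := (ℕ × ℕ) ⊕ ℕ ⊕ Unit`. -/
abbrev Xsp : Type := (ℕ × ℕ) ⊕ (ℕ ⊕ Unit)

/-- `Xₙ := {n} × ℕ`, the `n`-th countably infinite set. -/
def Xn (n : ℕ) : Set Xsp := {x | ∃ k : ℕ, x = Sum.inl (n, k)}

/-- `yₙ`, the `n`-th point of the middle summand. -/
def ypt (n : ℕ) : Xsp := Sum.inr (Sum.inl n)

/-- `z`, the point of the last summand. -/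
def zpt : Xsp := Sum.inr (Sum.inr ())

/-- The set `{yₙ : n ∈ ω}`. -/
def Yset : Set Xsp := Set.range ypt

/-- The cofinite filter on a subset `A ⊆ X`: generated by the sets `A \ K`, `K` finite. -/
def cofinOn {X : Type*} (A : Set X) : Filter X :=
  ⨅ K ∈ {K : Set X | K.Finite}, 𝓟 (A \ K)

/-- Convergence of ultrafilters: `V` converges to `x ∈ ⋃ₙ Xₙ` iff `V = pure x`;
`V` converges to `yₙ` iff `V = pure yₙ` or `V` refines the cofinite filter on `Xₙ`;
`V` converges to `z` iff `V = pure z`, or `V` refines the cofinite filter on `{yₙ : n ∈ ω}`,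
or `V` refines the cofinite filter on `{xₙ : n ∈ ω}` for some sequence with `xₙ ∈ Xₙ`. -/
def uconv (V : Ultrafilter Xsp) : Xsp → Prop
  | Sum.inl p => V = pure (Sum.inl p)
  | Sum.inr (Sum.inl n) =>
      V = pure (ypt n) ∨ (V : Filter Xsp) ≤ cofinOn (Xn n)
  | Sum.inr (Sum.inr _) =>
      V = pure zpt ∨ (V : Filter Xsp) ≤ cofinOn Yset ∨
        ∃ s : ℕ → Xsp, (∀ n, s n ∈ Xn n) ∧ (V : Filter Xsp) ≤ cofinOn (Set.range s)

/-- The convergence `ξ` on `Xsp`: a proper filter converges to `x` iff every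
ultrafilter finer than it converges to `x`. -/
def xconv (x : Xsp) (F : Filter Xsp) : Prop :=
  ∀ V : Ultrafilter Xsp, (V : Filter Xsp) ≤ F → uconv V x

-- auxiliary lemmas

lemma cofinOn_eq {X : Type*} (A : Set X) : cofinOn A = 𝓟 A ⊓ cofinite := by
  apply le_antisymm
  · refine le_inf ?_ ?_
    · exact le_trans (biInf_le _ (finite_empty : (∅ : Set X).Finite)) (by simp)
    · intro s hs
      have h1 : cofinOn A ≤ 𝓟 (A \ sᶜ) := biInf_le _ hs
      exact le_principal_iff.mp (h1.trans (principal_mono.mpr (fun x hx => by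
        by_contra h; exact hx.2 h)))
  · refine le_iInf₂ fun K hK => ?_
    rw [le_principal_iff]
    have := inter_mem_inf (mem_principal_self A) (hK.compl_mem_cofinite)
    simpa [Set.diff_eq] using this

lemma uconv_pure (x : Xsp) : uconv (pure x) x := by
  rcases x with p | n | u
  · rfl
  · exact Or.inl rfl
  · exact Or.inl (by cases u; rfl)

lemma mem_adhSet_iff {A : Set Xsp} {x : Xsp} :
    x ∈ adhSet xconv A ↔ ∃ V : Ultrafilter Xsp, A ∈ V ∧ uconv V x := by
  constructor
  · rintro ⟨G, hGne, hGA, hG⟩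
    obtain ⟨V, hV⟩ := Filter.exists_ultrafilter_le G
    exact ⟨V, le_principal_iff.mp (hV.trans hGA), hG V hV⟩
  · rintro ⟨V, hA, hV⟩
    refine ⟨V, V.neBot, le_principal_iff.mpr hA, fun W hW => ?_⟩
    rwa [Ultrafilter.coe_le_coe.mp hW]

lemma subset_adhSet {A : Set Xsp} : A ⊆ adhSet xconv A :=
  fun x hx => mem_adhSet_iff.mpr ⟨pure x, hx, uconv_pure x⟩

lemma exists_uf_iff {A T : Set Xsp} :
    (∃ V : Ultrafilter Xsp, A ∈ V ∧ (V : Filter Xsp) ≤ cofinOn T) ↔ (A ∩ T).Infinite := by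
  rw [cofinOn_eq]
  constructor
  · rintro ⟨V, hA, hV⟩
    have hle : (V : Filter Xsp) ≤ cofinite ⊓ 𝓟 (A ∩ T) := by
      refine le_inf (hV.trans inf_le_right) (le_principal_iff.mpr ?_)
      exact inter_mem hA (le_principal_iff.mp (hV.trans inf_le_left))
    exact cofinite_inf_principal_neBot_iff.mp (neBot_of_le hle)
  · intro h
    have : (cofinite ⊓ 𝓟 (A ∩ T)).NeBot := h.cofinite_inf_principal_neBot
    obtain ⟨V, hV⟩ := Filter.exists_ultrafilter_le (cofinite ⊓ 𝓟 (A ∩ T))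
    refine ⟨V, ?_, le_inf ?_ (hV.trans inf_le_left)⟩
    · exact mem_of_superset (le_principal_iff.mp (hV.trans inf_le_right)) inter_subset_left
    · exact le_principal_iff.mpr
        (mem_of_superset (le_principal_iff.mp (hV.trans inf_le_right)) inter_subset_right)

lemma mem_pure_uf {A : Set Xsp} {x : Xsp} (h : A ∈ (pure x : Ultrafilter Xsp)) : x ∈ A := h

lemma adh_inl {A : Set Xsp} {p : ℕ × ℕ} :
    Sum.inl p ∈ adhSet xconv A ↔ Sum.inl p ∈ A := by
  rw [mem_adhSet_iff]
  constructor
  · rintro ⟨V, hA, hV⟩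
    have : V = pure (Sum.inl p) := hV
    rw [this] at hA; exact hA
  · intro h; exact ⟨pure _, h, rfl⟩

lemma adh_ypt {A : Set Xsp} {n : ℕ} :
    ypt n ∈ adhSet xconv A ↔ ypt n ∈ A ∨ (A ∩ Xn n).Infinite := by
  rw [mem_adhSet_iff]
  constructor
  · rintro ⟨V, hA, hV⟩
    rcases hV with h | h
    · rw [h] at hA; exact Or.inl hA
    · exact Or.inr (exists_uf_iff.mp ⟨V, hA, h⟩)
  · rintro (h | h)
    · exact ⟨pure _, h, Or.inl rfl⟩
    · obtain ⟨V, hA, hV⟩ := exists_uf_iff.mpr h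
      exact ⟨V, hA, Or.inr hV⟩

lemma adh_zpt {A : Set Xsp} :
    zpt ∈ adhSet xconv A ↔ zpt ∈ A ∨ (A ∩ Yset).Infinite ∨
      ∃ s : ℕ → Xsp, (∀ n, s n ∈ Xn n) ∧ (A ∩ Set.range s).Infinite := by
  rw [mem_adhSet_iff]
  constructor
  · rintro ⟨V, hA, hV⟩
    rcases hV with h | h | ⟨s, hs, h⟩
    · rw [h] at hA; exact Or.inl hA
    · exact Or.inr (Or.inl (exists_uf_iff.mp ⟨V, hA, h⟩))
    · exact Or.inr (Or.inr ⟨s, hs, exists_uf_iff.mp ⟨V, hA, h⟩⟩)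
  · rintro (h | h | ⟨s, hs, h⟩)
    · exact ⟨pure _, h, Or.inl rfl⟩
    · obtain ⟨V, hA, hV⟩ := exists_uf_iff.mpr h
      exact ⟨V, hA, Or.inr (Or.inl hV)⟩
    · obtain ⟨V, hA, hV⟩ := exists_uf_iff.mpr h
      exact ⟨V, hA, Or.inr (Or.inr ⟨s, hs, hV⟩)⟩

lemma ypt_inj : Function.Injective ypt := fun a b h => by
  simpa [ypt] using h

/-- The convergence `ξ` on `X = (ℕ × ℕ) ⊕ ℕ ⊕ Unit` is subdiagonal:
`adh_ξ (adh_ξ A) = adh_ξ A` for every `A ⊆ X`. -/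
theorem xconv_subdiagonal :
    ∀ A : Set Xsp, adhSet xconv (adhSet xconv A) = adhSet xconv A := by
  classical
  intro A
  set B := adhSet xconv A with hBdef
  -- B and A agree on inl points
  have hagree : ∀ p : ℕ × ℕ, (Sum.inl p ∈ B ↔ Sum.inl p ∈ A) := fun p => adh_inl
  have hinterXn : ∀ n, B ∩ Xn n = A ∩ Xn n := by
    intro n
    ext x
    constructor
    · rintro ⟨hx, ⟨k, rfl⟩⟩; exact ⟨(hagree _).mp hx, ⟨k, rfl⟩⟩
    · rintro ⟨hx, ⟨k, rfl⟩⟩; exact ⟨(hagree _).mpr hx, ⟨k, rfl⟩⟩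
  apply Subset.antisymm _ subset_adhSet
  intro x hx
  rcases x with p | n | u
  · exact (adh_inl (A := B)).mp hx
  · -- ypt case
    rcases (adh_ypt (A := B)).mp hx with h | h
    · exact h
    · rw [hinterXn] at h
      exact adh_ypt.mpr (Or.inr h)
  · -- zpt case
    cases u
    have hx' : zpt ∈ adhSet xconv B := hx
    rcases (adh_zpt (A := B)).mp hx' with h | h | ⟨s, hs, h⟩
    · exact h
    · -- (B ∩ Yset).Infinite
      have himg : B ∩ Yset = ypt '' (ypt ⁻¹' B) := by
        rw [Set.image_preimage_eq_inter_range]; rfl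
      rw [himg] at h
      have hN : (ypt ⁻¹' B).Infinite := Set.Infinite.of_image _ h
      have hsub : ypt ⁻¹' B ⊆ {n | ypt n ∈ A} ∪ {n | (A ∩ Xn n).Infinite} := by
        intro n hn
        have hn2 : ypt n ∈ adhSet xconv A := hn
        rcases adh_ypt.mp hn2 with h1 | h1
        · exact Or.inl h1
        · exact Or.inr h1
      have : ({n | ypt n ∈ A} ∪ {n | (A ∩ Xn n).Infinite}).Infinite := hN.mono hsub
      rcases Set.infinite_union.mp this with h1 | h1
      · -- infinitely many yₙ in A
        refine adh_zpt.mpr (Or.inr (Or.inl ?_))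
        have : (ypt '' {n | ypt n ∈ A}).Infinite := h1.image (ypt_inj.injOn)
        refine this.mono ?_
        rintro _ ⟨n, hn, rfl⟩
        exact ⟨hn, ⟨n, rfl⟩⟩
      · -- infinitely many n with A ∩ Xn n infinite
        set s : ℕ → Xsp := fun n =>
          if h : (A ∩ Xn n).Infinite then h.nonempty.some else Sum.inl (n, 0) with hsdef
        have hsXn : ∀ n, s n ∈ Xn n := by
          intro n
          by_cases h : (A ∩ Xn n).Infinite
          · simp only [hsdef, dif_pos h]; exact h.nonempty.some_mem.2
          · simp only [hsdef, dif_neg h]; exact ⟨0, rfl⟩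
        have hsA : ∀ n ∈ {n | (A ∩ Xn n).Infinite}, s n ∈ A := by
          intro n hn
          have hn' : (A ∩ Xn n).Infinite := hn
          simp only [hsdef]
          rw [dif_pos hn']
          exact hn'.nonempty.some_mem.1
        have hsinj : Function.Injective s := by
          intro a b hab
          obtain ⟨k, hk⟩ := hsXn a
          obtain ⟨l, hl⟩ := hsXn b
          rw [hk, hl] at hab
          exact congrArg Prod.fst (Sum.inl.inj hab)
        refine adh_zpt.mpr (Or.inr (Or.inr ⟨s, hsXn, ?_⟩))
        have : (s '' {n | (A ∩ Xn n).Infinite}).Infinite := h1.image hsinj.injOn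
        refine this.mono ?_
        rintro _ ⟨n, hn, rfl⟩
        exact ⟨hsA n hn, ⟨n, rfl⟩⟩
    · -- third clause
      have heq : B ∩ Set.range s = A ∩ Set.range s := by
        ext x
        constructor
        · rintro ⟨hx, ⟨n, rfl⟩⟩
          obtain ⟨k, hk⟩ := hs n
          rw [hk] at hx ⊢
          exact ⟨(hagree _).mp hx, ⟨n, hk⟩⟩
        · rintro ⟨hx, ⟨n, rfl⟩⟩
          obtain ⟨k, hk⟩ := hs n
          rw [hk] at hx ⊢
          exact ⟨(hagree _).mpr hx, ⟨n, hk⟩⟩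
      rw [heq] at h
      exact adh_zpt.mpr (Or.inr (Or.inr ⟨s, hs, h⟩))
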